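/- arXiv:1812.06678 — 6 statements merged into one kernel-verified Lean document; each statement's English description precedes it below -/
import Mathlib

section
/- With F(ξ) = e_d + Σ_{i=1}^d (e_{i-1} − e_d) ξ_i as above, let Q_{1/d} = [0, 1/d]^d and K_† = {x ∈ K^d : x_d ≥ 1 − 1/d}. Then K_† ⊆ F(Q_{1/d}) ⊆ K^d. -/
open Finset

/-- The unit simplex `K^d = {x : ∀ i, 0 ≤ x i, ∑ x i ≤ 1}`. -/
def unitSimplex (d : ℕ) : Set (Fin d → ℝ) :=
  {x | (∀ i, 0 ≤ x i) ∧ ∑ i, x i ≤ 1}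

/-- The vector `e_{i-1}` of the paper: `e_0 = 0` and `e_j` the `j`-th standard basis vector. -/
def ePrev (n : ℕ) (i : Fin (n + 1)) : Fin (n + 1) → ℝ :=
  if h : i = 0 then 0 else Pi.single ((i.pred h).castSucc) 1

/-- The affine map `F(ξ) = e_d + ∑_{i=1}^d (e_{i-1} - e_d) ξ_i` (here `d = n+1`). -/
def paperF (n : ℕ) (ξ : Fin (n + 1) → ℝ) : Fin (n + 1) → ℝ :=
  Pi.single (Fin.last n) 1 +
    ∑ i : Fin (n + 1), ξ i • (ePrev n i - Pi.single (Fin.last n) (1:ℝ))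

lemma ePrev_castSucc (n : ℕ) (i : Fin (n + 2)) (k : Fin (n + 1)) :
    ePrev (n + 1) i (k.castSucc) = if i = k.succ then 1 else 0 := by
  unfold ePrev
  split
  · next h => simp [h, (Fin.succ_ne_zero k).symm]
  · next h =>
    rw [Pi.single_apply]
    congr 1
    rw [Fin.castSucc_inj, eq_comm, eq_iff_iff]
    constructor
    · rintro rfl; simp
    · rintro rfl; exact (Fin.succ_pred _ h).symm
lemma ePrev_last (n : ℕ) (i : Fin (n + 2)) :
    ePrev (n + 1) i (Fin.last (n + 1)) = 0 := by
  unfold ePrev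
  split
  · simp
  · exact Pi.single_eq_of_ne (Fin.castSucc_lt_last _).ne' 1

lemma paperF_castSucc (n : ℕ) (ξ : Fin (n + 2) → ℝ) (k : Fin (n + 1)) :
    paperF (n + 1) ξ (k.castSucc) = ξ k.succ := by
  unfold paperF
  have hne : k.castSucc ≠ Fin.last (n + 1) := (Fin.castSucc_lt_last _).ne
  simp only [Pi.add_apply, Finset.sum_apply, Pi.smul_apply, Pi.sub_apply,
    Pi.single_eq_of_ne hne, ePrev_castSucc, smul_eq_mul]
  rw [Finset.sum_eq_single k.succ]
  · simp
  · intro i _ hi; simp [hi]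
  · simp
lemma paperF_last (n : ℕ) (ξ : Fin (n + 2) → ℝ) :
    paperF (n + 1) ξ (Fin.last (n + 1)) = 1 - ∑ i, ξ i := by
  unfold paperF
  simp only [Pi.add_apply, Finset.sum_apply, Pi.smul_apply, Pi.sub_apply,
    ePrev_last, Pi.single_eq_same, smul_eq_mul, zero_sub, mul_neg, mul_one]
  rw [Finset.sum_neg_distrib]
  ring

/-- For `d = n + 2 ≥ 2`: with `Q_{1/d} = [0, 1/d]^d` and
`K_† = {x ∈ K^d : x_d ≥ 1 - 1/d}`, one has `K_† ⊆ F(Q_{1/d}) ⊆ K^d`. -/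
theorem simplex_subdivision_inclusions (n : ℕ) :
    {x ∈ unitSimplex (n + 2) | 1 - 1 / (n + 2 : ℝ) ≤ x (Fin.last (n + 1))} ⊆
      paperF (n + 1) '' (Set.univ.pi fun _ : Fin (n + 2) => Set.Icc (0:ℝ) (1 / (n + 2 : ℝ))) ∧
    paperF (n + 1) '' (Set.univ.pi fun _ : Fin (n + 2) => Set.Icc (0:ℝ) (1 / (n + 2 : ℝ))) ⊆
      unitSimplex (n + 2) := by
  have hd : (0:ℝ) < (n + 2 : ℝ) := by positivity
  constructor
  · rintro x ⟨⟨hx0, hxs⟩, hxd⟩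
    refine ⟨fun i => if h : i = 0 then 1 - ∑ j, x j else x ((i.pred h).castSucc), ?_, ?_⟩
    · intro i _
      dsimp only
      by_cases h : i = 0
      · rw [dif_pos h]
        have hle : x (Fin.last (n+1)) ≤ ∑ j, x j :=
          Finset.single_le_sum (fun j _ => hx0 j) (Finset.mem_univ _)
        exact ⟨by linarith, by linarith⟩
      · rw [dif_neg h]
        refine ⟨hx0 _, ?_⟩
        have hjne : (i.pred h).castSucc ≠ Fin.last (n+1) := (Fin.castSucc_lt_last _).ne
        have hpair : x ((i.pred h).castSucc) + x (Fin.last (n+1)) ≤ ∑ k, x k := by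
          have := Finset.sum_le_sum_of_subset_of_nonneg
            (Finset.subset_univ ({(i.pred h).castSucc, Fin.last (n+1)} : Finset (Fin (n+2))))
            (fun k _ _ => hx0 k)
          rwa [Finset.sum_pair hjne] at this
        linarith
    · funext j
      induction j using Fin.lastCases with
      | last =>
        rw [paperF_last, Fin.sum_univ_succ]
        have h2 : ∀ k : Fin (n+1),
            (if h : (k.succ : Fin (n+2)) = 0 then 1 - ∑ j, x j
              else x (((k.succ).pred h).castSucc)) = x k.castSucc := by
          intro k; rw [dif_neg (Fin.succ_ne_zero k)]; simp
        simp only [h2]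
        rw [dif_pos trivial]
        rw [show ∑ j, x j = ∑ k : Fin (n+1), x k.castSucc + x (Fin.last (n+1)) from
          Fin.sum_univ_castSucc x]
        ring
      | cast k =>
        rw [paperF_castSucc, dif_neg (Fin.succ_ne_zero k)]
        simp
  · rintro x ⟨ξ, hξ, rfl⟩
    have hξ' : ∀ i, ξ i ∈ Set.Icc (0:ℝ) (1/(n+2:ℝ)) := fun i => hξ i (Set.mem_univ i)
    have hsum : ∑ i, ξ i ≤ 1 := by
      calc ∑ i, ξ i ≤ ∑ _i : Fin (n+2), (1/(n+2:ℝ)) :=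
            Finset.sum_le_sum (fun i _ => (hξ' i).2)
        _ = 1 := by
            rw [Finset.sum_const, Finset.card_univ, Fintype.card_fin, nsmul_eq_mul,
              mul_one_div]
            push_cast
            exact div_self hd.ne'
    constructor
    · intro j
      induction j using Fin.lastCases with
      | last => rw [paperF_last]; linarith
      | cast k => rw [paperF_castSucc]; exact (hξ' _).1
    · rw [Fin.sum_univ_castSucc]
      simp only [paperF_castSucc, paperF_last]
      rw [Fin.sum_univ_succ (f := ξ)]
      have := (hξ' 0).1
      linarith
end

section
/- Let v : K → ℝ with K ⊂ ℝ^d a simplex, v ∈ H¹(K), and assume v has zero mean value on K, i.e., ∫_K v = 0. Then ‖v‖_{L²(∂K)} ≤ C_Tr ‖∇v‖_{L²(K)}^{1/2} ‖v‖_{L²(K)}^{1/2} with C_Tr = √(ϑ (d+1)(2 + d/π)), where ϑ = h_K/ρ_K is the ratio of the diameter h_K of K to the diameter ρ_K of the largest inscribed ball, assuming the two standard ingredients: the per-face trace bound ‖v‖²_{L²(F)} ≤ ϑ (2‖∇v‖_{L²(K)} + (d/h_K)‖v‖_{L²(K)}) ‖v‖_{L²(K)} for each face F of K, and the Poincaré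 inequality ‖v‖_{L²(K)} ≤ (h_K/π) ‖∇v‖_{L²(K)} for mean-zero v. -/
open Real Finset

/-- Trace inequality with explicit constant for a mean-zero `v ∈ H¹(K)` on a `d`-simplex `K`.
Here `G = ‖∇v‖_{L²(K)}`, `V = ‖v‖_{L²(K)}`, and `T f = ‖v‖_{L²(F)}` for each of the `d+1`
faces `F` of `K`; `ϑ = h/ρ` is the shape-regularity ratio. Assuming the per-face trace bound
`‖v‖²_{L²(F)} ≤ ϑ (2‖∇v‖ + (d/h)‖v‖)‖v‖` and the Poincaré inequality
`‖v‖ ≤ (h/π)‖∇v‖` for mean-zero `v`, one gets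
`‖v‖_{L²(∂K)} ≤ √(ϑ(d+1)(2 + d/π)) ‖∇v‖^{1/2} ‖v‖^{1/2}`. -/
theorem trace_inequality_explicit_constant (d : ℕ) (hd : 1 ≤ d) (ϑ h : ℝ)
    (hϑ : 0 < ϑ) (hh : 0 < h) (G V : ℝ) (hG : 0 ≤ G) (hV : 0 ≤ V)
    (T : Fin (d + 1) → ℝ) (hT : ∀ f, 0 ≤ T f)
    (htrace : ∀ f : Fin (d + 1), (T f) ^ 2 ≤ ϑ * (2 * G + (d / h) * V) * V)
    (hpoincare : V ≤ (h / π) * G) :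
    Real.sqrt (∑ f : Fin (d + 1), (T f) ^ 2) ≤
      Real.sqrt (ϑ * (d + 1) * (2 + d / π)) * Real.sqrt G * Real.sqrt V := by
  have hπ : (0:ℝ) < π := Real.pi_pos
  have hd0 : (0:ℝ) ≤ (d:ℝ) := Nat.cast_nonneg d
  have h1 : (d / h) * V ≤ (d / π) * G := by
    calc (d / h) * V ≤ (d / h) * ((h / π) * G) :=
          mul_le_mul_of_nonneg_left hpoincare (by positivity)
      _ = (d / π) * G := by field_simp
  have hbound : ∀ f : Fin (d + 1), (T f) ^ 2 ≤ ϑ * (2 + d / π) * G * V := by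
    intro f
    have := htrace f
    have h2 : ϑ * (2 * G + (d / h) * V) * V ≤ ϑ * (2 + d / π) * G * V := by
      have : 2 * G + (d / h) * V ≤ (2 + d / π) * G := by nlinarith
      nlinarith [mul_le_mul_of_nonneg_right (mul_le_mul_of_nonneg_left this hϑ.le) hV]
    linarith
  have hsum : ∑ f : Fin (d + 1), (T f) ^ 2 ≤ (ϑ * (d + 1) * (2 + d / π)) * (G * V) := by
    calc ∑ f : Fin (d + 1), (T f) ^ 2 ≤ ∑ _f : Fin (d + 1), ϑ * (2 + d / π) * G * V :=
          Finset.sum_le_sum fun f _ => hbound f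
      _ = (d + 1 : ℕ) * (ϑ * (2 + d / π) * G * V) := by
          rw [Finset.sum_const, Finset.card_univ, Fintype.card_fin, nsmul_eq_mul]
      _ = (ϑ * (d + 1) * (2 + d / π)) * (G * V) := by push_cast; ring
  calc Real.sqrt (∑ f : Fin (d + 1), (T f) ^ 2)
      ≤ Real.sqrt ((ϑ * (d + 1) * (2 + d / π)) * (G * V)) := Real.sqrt_le_sqrt hsum
    _ = Real.sqrt (ϑ * (d + 1) * (2 + d / π)) * Real.sqrt G * Real.sqrt V := by
        rw [Real.sqrt_mul (by positivity), Real.sqrt_mul hG, ← mul_assoc]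
end

section
/- Let N = (m+1)²/2 for an odd positive integer m, h = 1/(2N), and x_i = i·h for i = −N+1,…,N−1. Then Σ_{i=−N+1}^{N−1} cos²(mπ x_i) = N. -/
open Real Finset

lemma pair_aux (k : ℕ) (x : ℝ) :
    Real.cos (x - (2 * (k:ℝ) + 1) * π / 2) ^ 2 + Real.cos x ^ 2 = 1 := by
  rw [Real.cos_sq, Real.cos_sq,
    show 2 * (x - (2 * (k:ℝ) + 1) * π / 2) = (2*x - π) - k * (2*π) by ring,
    Real.cos_sub_nat_mul_two_pi, Real.cos_sub_pi]
  ring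

/-- For `m` an odd positive integer, `N = (m+1)²/2`, `h = 1/(2N)`, `x_i = i h`:
`Σ_{i=-N+1}^{N-1} cos²(mπ x_i) = N`. -/
theorem sum_cos_sq_nodes (m N : ℕ) (hm : Odd m) (hm0 : 0 < m)
    (hN : 2 * N = (m + 1) ^ 2) :
    ∑ i ∈ Finset.Icc (-(N:ℤ) + 1) ((N:ℤ) - 1),
        (Real.cos ((m:ℝ) * π * ((i : ℝ) * (1 / (2 * (N:ℝ)))))) ^ 2 = N := by
  obtain ⟨k, hk⟩ := hm
  have hN2 : 2 ≤ N := by nlinarith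
  have hNR : (0:ℝ) < (N:ℝ) := by exact_mod_cast (show 0 < N by omega)
  set f : ℤ → ℝ := fun i => (Real.cos ((m:ℝ) * π * ((i : ℝ) * (1 / (2 * (N:ℝ)))))) ^ 2 with hf
  -- split the interval
  have hsplit : Finset.Icc (-(N:ℤ) + 1) ((N:ℤ) - 1)
      = Finset.Icc (-(N:ℤ) + 1) (-1) ∪ Finset.Icc 0 ((N:ℤ) - 1) := by
    ext x; simp only [Finset.mem_Icc, Finset.mem_union]; omega
  have hdisj : Disjoint (Finset.Icc (-(N:ℤ) + 1) (-1)) (Finset.Icc 0 ((N:ℤ) - 1)) := by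
    simp only [Finset.disjoint_left, Finset.mem_Icc]; omega
  rw [hsplit, Finset.sum_union hdisj]
  -- second piece: pull out 0
  have h0 : Finset.Icc (0:ℤ) ((N:ℤ) - 1) = insert 0 (Finset.Icc 1 ((N:ℤ) - 1)) := by
    ext x; simp only [Finset.mem_Icc, Finset.mem_insert]; omega
  rw [h0, Finset.sum_insert (by simp)]
  -- first piece: reindex by i ↦ i + (-N)
  have hmap : Finset.Icc (-(N:ℤ) + 1) (-1)
      = (Finset.Icc (1:ℤ) ((N:ℤ) - 1)).map (addRightEmbedding (-(N:ℤ))) := by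
    rw [Finset.map_add_right_Icc]; congr 1 <;> ring
  rw [hmap, Finset.sum_map]
  have hf0 : f 0 = 1 := by simp [hf]
  have hpair : ∀ i ∈ Finset.Icc (1:ℤ) ((N:ℤ) - 1),
      f (addRightEmbedding (-(N:ℤ)) i) + f i = 1 := by
    intro i _
    have hxe : (m:ℝ) * π * (((i + -(N:ℤ) : ℤ) : ℝ) * (1 / (2 * (N:ℝ))))
        = (m:ℝ) * π * ((i : ℝ) * (1 / (2 * (N:ℝ)))) - (2 * (k:ℝ) + 1) * π / 2 := by
      push_cast [hk]
      field_simp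
      ring
    simp only [hf, addRightEmbedding_apply]
    rw [hxe]
    exact pair_aux k _
  rw [add_left_comm, ← Finset.sum_add_distrib, Finset.sum_congr rfl hpair, Finset.sum_const]
  norm_num
  rw [Nat.cast_sub (by omega : 1 ≤ N)]
  push_cast
  ring
end

section
/- For a uniform mesh of (−1/2, 1/2) with nodes x_i = ih, h = 1/(2N), let f be the continuous piecewise affine interpolant of x ↦ cos(mπx) at the nodes (vanishing at ±1/2 since m is odd). Then f satisfies ∫_{−1/2}^{1/2} f′ v′ dx = μ_h ∫_{−1/2}^{1/2} f v dx for all continuous piecewise affine v vanishing at ±1/2, where μ_h = (6/(2 + cos(mπh))) · (1 − cos(mπh))/h². -/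
/-!
On each mesh cell `f` and `v` are affine, so the stiffness and mass integrals are exact
quadratic forms in the nodal values: `∑ ΔFₖ ΔVₖ / h` and `h/6 ∑ (2FₖVₖ + FₖVₖ₊₁ + Fₖ₊₁Vₖ + 2Fₖ₊₁Vₖ₊₁)`.
The nodal values `Fₖ = cos(mπxₖ)` satisfy `Fₖ₊₂ + Fₖ = 2c Fₖ₊₁` with `c = cos(mπh)`, and with this
recurrence `(2 + c) ΔFₖΔVₖ - (1 - c)(mass term)ₖ` telescopes; the boundary terms carry a factor `V₀`
or `V_{2N}`, which vanish.
-/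

open Real MeasureTheory intervalIntegral

open Set Finset Filter Topology

def IsAffineOn (f : ℝ → ℝ) (s : Set ℝ) : Prop :=
  ∃ a b : ℝ, ∀ x ∈ s, f x = a * x + b

namespace IsAffineOn

variable {f v : ℝ → ℝ} {s : Set ℝ} {p q : ℝ}

theorem continuousOn (hf : IsAffineOn f s) : ContinuousOn f s := by
  obtain ⟨a, b, hab⟩ := hf
  exact (continuous_const.mul continuous_id |>.add continuous_const).continuousOn.congr hab

theorem deriv_eq_slope (hf : IsAffineOn f (Icc p q)) (hpq : p < q) {x : ℝ} (hx : x ∈ Ioo p q) :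
    deriv f x = (f q - f p) / (q - p) := by
  obtain ⟨a, b, hab⟩ := hf
  have hloc : f =ᶠ[𝓝 x] fun y => a * y + b := eventuallyEq_of_mem (Icc_mem_nhds hx.1 hx.2) hab
  rw [hloc.deriv_eq, hab p (left_mem_Icc.2 hpq.le), hab q (right_mem_Icc.2 hpq.le),
    eq_div_iff (sub_ne_zero.2 hpq.ne'), ((hasDerivAt_id' x).const_mul a |>.add_const b).deriv]
  ring

theorem eqOn_deriv_mul_deriv (hf : IsAffineOn f (Icc p q)) (hv : IsAffineOn v (Icc p q))
    (hpq : p < q) :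
    EqOn (fun x => deriv f x * deriv v x)
      (fun _ => (f q - f p) / (q - p) * ((v q - v p) / (q - p))) (Ioo p q) := fun _ hx => by
  simp only [hf.deriv_eq_slope hpq hx, hv.deriv_eq_slope hpq hx]

theorem intervalIntegrable_deriv_mul_deriv (hf : IsAffineOn f (Icc p q))
    (hv : IsAffineOn v (Icc p q)) (hpq : p < q) :
    IntervalIntegrable (fun x => deriv f x * deriv v x) volume p q := by
  rw [intervalIntegrable_iff_integrableOn_Ioo_of_le hpq.le]
  exact (integrableOn_const measure_Ioo_lt_top.ne).congr_fun
    (hf.eqOn_deriv_mul_deriv hv hpq).symm measurableSet_Ioo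

theorem integral_deriv_mul_deriv (hf : IsAffineOn f (Icc p q)) (hv : IsAffineOn v (Icc p q))
    (hpq : p < q) :
    ∫ x in p..q, deriv f x * deriv v x = (f q - f p) * (v q - v p) / (q - p) := by
  rw [integral_of_le hpq.le, integral_Ioc_eq_integral_Ioo,
    setIntegral_congr_fun measurableSet_Ioo (hf.eqOn_deriv_mul_deriv hv hpq), setIntegral_const,
    Real.volume_real_Ioo_of_le hpq.le, smul_eq_mul]
  field_simp [sub_ne_zero.2 hpq.ne']

theorem integral_mul (hf : IsAffineOn f (Icc p q)) (hv : IsAffineOn v (Icc p q)) (hpq : p ≤ q) :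
    ∫ x in p..q, f x * v x =
      (q - p) / 6 * (2 * f p * v p + f p * v q + f q * v p + 2 * f q * v q) := by
  obtain ⟨a, b, hab⟩ := hf
  obtain ⟨c, d, hcd⟩ := hv
  have hEq : EqOn (fun x => f x * v x) (fun x => (a * x + b) * (c * x + d)) (uIcc p q) :=
    fun x hx => by
      rw [uIcc_of_le hpq] at hx
      simp only [hab x hx, hcd x hx]
  have hprim : ∀ x : ℝ, HasDerivAt
      (fun y => a * c * y ^ 3 / 3 + (a * d + b * c) * y ^ 2 / 2 + b * d * y)
      ((a * x + b) * (c * x + d)) x := fun x => by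
    refine ((((hasDerivAt_pow 3 x).const_mul (a * c)).div_const 3).add
      (((hasDerivAt_pow 2 x).const_mul (a * d + b * c)).div_const 2)).add
      ((hasDerivAt_id' x).const_mul (b * d)) |>.congr_deriv ?_
    norm_num
    ring
  rw [integral_congr hEq, integral_eq_sub_of_hasDerivAt (fun x _ => hprim x)
    (by apply Continuous.intervalIntegrable; fun_prop),
    hab p (left_mem_Icc.2 hpq), hab q (right_mem_Icc.2 hpq),
    hcd p (left_mem_Icc.2 hpq), hcd q (right_mem_Icc.2 hpq)]
  ring

end IsAffineOn

def stiffnessSum (F V : ℕ → ℝ) (n : ℕ) : ℝ :=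
  ∑ k ∈ range n, (F (k + 1) - F k) * (V (k + 1) - V k)

def massSum (F V : ℕ → ℝ) (n : ℕ) : ℝ :=
  ∑ k ∈ range n, (2 * F k * V k + F k * V (k + 1) + F (k + 1) * V k + 2 * F (k + 1) * V (k + 1))

theorem stiffnessSum_eq_massSum_of_recurrence {F V : ℕ → ℝ} {n : ℕ} {c : ℝ}
    (hrec : ∀ k, k + 2 ≤ n → F (k + 2) + F k = 2 * c * F (k + 1))
    (hV₀ : V 0 = 0) (hVn : V n = 0) :
    (2 + c) * stiffnessSum F V n = (1 - c) * massSum F V n := by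
  -- The `k`-th summand differs from `g (k + 1) - g k` by `-3 V (k + 1)` times the recurrence
  -- defect at `k`; at `k = n - 1` the recurrence is unavailable but `V n = 0`.
  set g : ℕ → ℝ := fun k => 3 * V k * (F (k + 1) - c * F k)
  have hterm : ∀ k < n, (2 + c) * ((F (k + 1) - F k) * (V (k + 1) - V k)) -
      (1 - c) * (2 * F k * V k + F k * V (k + 1) + F (k + 1) * V k + 2 * F (k + 1) * V (k + 1))
      = g (k + 1) - g k := by
    intro k hk
    have hV : V (k + 1) * (F (k + 2) + F k - 2 * c * F (k + 1)) = 0 := by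
      rcases Nat.lt_or_ge (k + 1) n with hk' | hk'
      · rw [hrec k hk', sub_self, mul_zero]
      · rw [show k + 1 = n by omega, hVn, zero_mul]
    linear_combination -3 * hV
  have hsum := Finset.sum_range_sub g n
  rw [← Finset.sum_congr rfl fun k hk => hterm k (mem_range.1 hk), Finset.sum_sub_distrib,
    ← Finset.mul_sum, ← Finset.mul_sum] at hsum
  simp only [g, hV₀, hVn, zero_mul, mul_zero, sub_zero] at hsum
  rw [stiffnessSum, massSum]
  linarith

section UniformMesh

variable {f v : ℝ → ℝ} {x₀ h : ℝ} {n : ℕ}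

theorem integral_deriv_mul_deriv_eq_stiffnessSum (hh : 0 < h)
    (hf : ∀ k < n, IsAffineOn f (Icc (x₀ + k * h) (x₀ + (k + 1) * h)))
    (hv : ∀ k < n, IsAffineOn v (Icc (x₀ + k * h) (x₀ + (k + 1) * h))) :
    ∫ x in x₀..x₀ + n * h, deriv f x * deriv v x =
      stiffnessSum (fun k => f (x₀ + k * h)) (fun k => v (x₀ + k * h)) n / h := by
  have hnode : ∀ k : ℕ, x₀ + ((k + 1 : ℕ) : ℝ) * h = x₀ + (k + 1) * h := fun k => by push_cast; ring
  have hlt : ∀ k : ℕ, x₀ + k * h < x₀ + (k + 1) * h := fun k => by linarith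
  have hsum := sum_integral_adjacent_intervals (a := fun k : ℕ => x₀ + k * h) (μ := volume)
    (f := fun x => deriv f x * deriv v x) fun k hk => by
      simp only [hnode]; exact (hf k hk).intervalIntegrable_deriv_mul_deriv (hv k hk) (hlt k)
  simp only [Nat.cast_zero, zero_mul, add_zero] at hsum
  rw [← hsum, stiffnessSum, Finset.sum_div]
  refine Finset.sum_congr rfl fun k hk => ?_
  simp only [hnode]
  rw [(hf k (mem_range.1 hk)).integral_deriv_mul_deriv (hv k (mem_range.1 hk)) (hlt k),
    show x₀ + (k + 1) * h - (x₀ + k * h) = h by ring]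

theorem integral_mul_eq_massSum (hh : 0 ≤ h)
    (hf : ∀ k < n, IsAffineOn f (Icc (x₀ + k * h) (x₀ + (k + 1) * h)))
    (hv : ∀ k < n, IsAffineOn v (Icc (x₀ + k * h) (x₀ + (k + 1) * h))) :
    ∫ x in x₀..x₀ + n * h, f x * v x =
      h / 6 * massSum (fun k => f (x₀ + k * h)) (fun k => v (x₀ + k * h)) n := by
  have hnode : ∀ k : ℕ, x₀ + ((k + 1 : ℕ) : ℝ) * h = x₀ + (k + 1) * h := fun k => by push_cast; ring
  have hle : ∀ k : ℕ, x₀ + k * h ≤ x₀ + (k + 1) * h := fun k => by linarith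
  have hsum := sum_integral_adjacent_intervals (a := fun k : ℕ => x₀ + k * h) (μ := volume)
    (f := fun x => f x * v x) fun k hk => by
      simp only [hnode]
      exact ((hf k hk).continuousOn.mul (hv k hk).continuousOn).intervalIntegrable_of_Icc (hle k)
  simp only [Nat.cast_zero, zero_mul, add_zero] at hsum
  rw [← hsum, massSum, Finset.mul_sum]
  refine Finset.sum_congr rfl fun k hk => ?_
  simp only [hnode]
  rw [(hf k (mem_range.1 hk)).integral_mul (hv k (mem_range.1 hk)) (hle k),
    show x₀ + (k + 1) * h - (x₀ + k * h) = h by ring]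

end UniformMesh

theorem recurrence_of_eq_cos {F : ℕ → ℝ} {n : ℕ} {θ φ : ℝ}
    (hF : ∀ k ≤ n, F k = cos (θ + k * φ)) :
    ∀ k, k + 2 ≤ n → F (k + 2) + F k = 2 * cos φ * F (k + 1) := by
  intro k hk
  have hplus : θ + ((k + 2 : ℕ) : ℝ) * φ = θ + ((k + 1 : ℕ) : ℝ) * φ + φ := by push_cast; ring
  have hminus : θ + k * φ = θ + ((k + 1 : ℕ) : ℝ) * φ - φ := by push_cast; ring
  rw [hF _ hk, hF _ (by omega), hF _ (by omega), hplus, hminus, cos_add, cos_sub]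
  ring

section SymmetricMesh

variable {N : ℕ} {h : ℝ}

theorem intCast_sub_mul_eq (hNh : (N : ℝ) * h = 1 / 2) (k : ℕ) :
    ((k - N : ℤ) : ℝ) * h = -(1 / 2) + k * h := by
  push_cast
  linear_combination -hNh

theorem intCast_sub_add_one_mul_eq (hNh : (N : ℝ) * h = 1 / 2) (k : ℕ) :
    (((k - N : ℤ) : ℝ) + 1) * h = -(1 / 2) + (k + 1) * h := by
  push_cast
  linear_combination -hNh

theorem isAffineOn_shifted_cells {f : ℝ → ℝ} (hNh : (N : ℝ) * h = 1 / 2)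
    (hf : ∀ i : ℤ, -(N : ℤ) ≤ i → i < N → IsAffineOn f (Icc (i * h) ((i + 1) * h))) :
    ∀ k < 2 * N, IsAffineOn f (Icc (-(1 / 2) + k * h) (-(1 / 2) + (k + 1) * h)) := by
  intro k hk
  simpa only [intCast_sub_mul_eq hNh, intCast_sub_add_one_mul_eq hNh]
    using hf (k - N) (by omega) (by omega)

end SymmetricMesh

theorem interpolant_discrete_eigenfunction_general (m N : ℕ)
    (hN : 2 * N = (m + 1) ^ 2)
    (h : ℝ) (hh : h = 1 / (2 * (N:ℝ)))
    (f v : ℝ → ℝ)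
    -- `f` is the continuous piecewise affine nodal interpolant of `cos(mπ·)`
    (hfnodes : ∀ i : ℤ, -(N:ℤ) ≤ i → i ≤ (N:ℤ) →
      f ((i:ℝ) * h) = Real.cos ((m:ℝ) * π * ((i:ℝ) * h)))
    (hfaff : ∀ i : ℤ, -(N:ℤ) ≤ i → i < (N:ℤ) → ∃ a b : ℝ,
      ∀ x ∈ Set.Icc ((i:ℝ) * h) (((i:ℝ) + 1) * h), f x = a * x + b)
    -- `v` is continuous piecewise affine and vanishes at `±1/2`
    (hvaff : ∀ i : ℤ, -(N:ℤ) ≤ i → i < (N:ℤ) → ∃ a b : ℝ,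
      ∀ x ∈ Set.Icc ((i:ℝ) * h) (((i:ℝ) + 1) * h), v x = a * x + b)
    (hv0l : v (-(1/2)) = 0) (hv0r : v (1/2) = 0) :
    ∫ x in Set.Ioo (-(1/2) : ℝ) (1/2), deriv f x * deriv v x =
      (6 / (2 + Real.cos ((m:ℝ) * π * h)) * ((1 - Real.cos ((m:ℝ) * π * h)) / h ^ 2)) *
        ∫ x in Set.Ioo (-(1/2) : ℝ) (1/2), f x * v x := by
  have hN0 : (0 : ℝ) < N := by
    have : 0 < 2 * N := hN ▸ by positivity
    exact_mod_cast (show 0 < N by omega)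
  have hh0 : 0 < h := by rw [hh]; positivity
  have hNh : (N : ℝ) * h = 1 / 2 := by rw [hh]; field_simp
  have hend : -(1 / 2 : ℝ) + ((2 * N : ℕ) : ℝ) * h = 1 / 2 := by push_cast; linarith
  have hIoo (g : ℝ → ℝ) : ∫ x in Ioo (-(1 / 2) : ℝ) (1 / 2), g x =
      ∫ x in -(1 / 2)..-(1 / 2) + ((2 * N : ℕ) : ℝ) * h, g x := by
    rw [hend, integral_of_le (by norm_num), integral_Ioc_eq_integral_Ioo]
  have hcf := isAffineOn_shifted_cells hNh hfaff
  have hcv := isAffineOn_shifted_cells hNh hvaff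
  have hfk : ∀ k ≤ 2 * N, f (-(1 / 2) + k * h) = cos (m * π * (-(1 / 2)) + k * (m * π * h)) := by
    intro k hk
    rw [← intCast_sub_mul_eq hNh, hfnodes _ (by omega) (by omega), intCast_sub_mul_eq hNh]
    congr 1
    ring
  have key := stiffnessSum_eq_massSum_of_recurrence (F := fun k => f (-(1 / 2) + k * h))
    (V := fun k => v (-(1 / 2) + k * h)) (n := 2 * N) (recurrence_of_eq_cos hfk)
    (by simpa using hv0l) (by simpa only [hend] using hv0r)
  have h2c : 0 < 2 + cos (m * π * h) := by linarith [neg_one_le_cos (m * π * h)]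
  rw [hIoo, hIoo, integral_deriv_mul_deriv_eq_stiffnessSum hh0 hcf hcv,
    integral_mul_eq_massSum hh0.le hcf hcv]
  generalize stiffnessSum _ _ _ = S at key ⊢
  generalize massSum _ _ _ = M at key ⊢
  generalize cos (m * π * h) = c at key h2c ⊢
  field_simp
  linear_combination key

/-- On a uniform mesh of `(-1/2, 1/2)` with nodes `x_i = i h`, `h = 1/(2N)`,
`N = (m+1)²/2` with `m` odd, the continuous piecewise affine interpolant `f` of
`x ↦ cos(mπx)` at the nodes satisfies the discrete eigenvalue identity
`∫ f′ v′ = μ_h ∫ f v` for every continuous piecewise affine `v` vanishing at `±1/2`,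
where `μ_h = (6/(2 + cos(mπh)))(1 - cos(mπh))/h²`. -/
theorem interpolant_discrete_eigenfunction (m N : ℕ) (hm : Odd m) (hm0 : 0 < m)
    (hN : 2 * N = (m + 1) ^ 2)
    (h : ℝ) (hh : h = 1 / (2 * (N:ℝ)))
    (f v : ℝ → ℝ)
    -- `f` is the continuous piecewise affine nodal interpolant of `cos(mπ·)`
    (hfc : ContinuousOn f (Set.Icc (-(1/2) : ℝ) (1/2)))
    (hfnodes : ∀ i : ℤ, -(N:ℤ) ≤ i → i ≤ (N:ℤ) →
      f ((i:ℝ) * h) = Real.cos ((m:ℝ) * π * ((i:ℝ) * h)))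
    (hfaff : ∀ i : ℤ, -(N:ℤ) ≤ i → i < (N:ℤ) → ∃ a b : ℝ,
      ∀ x ∈ Set.Icc ((i:ℝ) * h) (((i:ℝ) + 1) * h), f x = a * x + b)
    -- `v` is continuous piecewise affine and vanishes at `±1/2`
    (hvc : ContinuousOn v (Set.Icc (-(1/2) : ℝ) (1/2)))
    (hvaff : ∀ i : ℤ, -(N:ℤ) ≤ i → i < (N:ℤ) → ∃ a b : ℝ,
      ∀ x ∈ Set.Icc ((i:ℝ) * h) (((i:ℝ) + 1) * h), v x = a * x + b)
    (hv0l : v (-(1/2)) = 0) (hv0r : v (1/2) = 0) :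
    ∫ x in Set.Ioo (-(1/2) : ℝ) (1/2), deriv f x * deriv v x =
      (6 / (2 + Real.cos ((m:ℝ) * π * h)) * ((1 - Real.cos ((m:ℝ) * π * h)) / h ^ 2)) *
        ∫ x in Set.Ioo (-(1/2) : ℝ) (1/2), f x * v x :=
  interpolant_discrete_eigenfunction_general m N hN h hh f v hfnodes hfaff hvaff hv0l hv0r
end

section
/- Let K ⊂ ℝ^d be a simplex with diameter h_K and inscribed-ball diameter ρ_K such that h_K/ρ_K ≤ ϑ. Assume ‖∂w/∂x_i‖_{L²(K̂)} ≤ C_{p+1,d} ‖w‖_{L²(K̂)} holds for all scalar polynomials w of degree ≤ p+1 on the unit simplex K̂ and each i. Then for every v ∈ RTN_p(K): h_K ‖div v‖_{L²(K)} ≤ √(2d) · ϑ · C_{p+1,d} · ‖v‖_{L²(K)}. -/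
open MeasureTheory Real Finset

noncomputable section

/-- Divergence of a vector field on `ℝ^d` (Euclidean coordinates). -/
def pdivE (d : ℕ) (f : EuclideanSpace ℝ (Fin d) → EuclideanSpace ℝ (Fin d))
    (x : EuclideanSpace ℝ (Fin d)) : ℝ :=
  ∑ i, fderiv ℝ f x (EuclideanSpace.single i 1) i

/-- The unit simplex `K̂` in `ℝ^d`. -/
def unitSimplexE (d : ℕ) : Set (EuclideanSpace ℝ (Fin d)) :=
  {x | (∀ i, 0 ≤ x i) ∧ ∑ i, x i ≤ 1}

/-!
Write `K = T K̂` with `T x = J x + c`. The pulled-back field `F = J⁻¹ ∘ v ∘ T` (the Piola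
transform without the factor `det J`, which cancels) again has polynomial components of degree
`≤ p + 1`, and `div F = (div v) ∘ T` because the trace is invariant under conjugation. On `K̂`,
Cauchy–Schwarz `(∑ᵢ ∂ᵢFᵢ)² ≤ d ∑ᵢ (∂ᵢFᵢ)²` and the scalar inverse inequality give
`‖div F‖² ≤ d C² ‖F‖²`, while `|F| ≤ ‖J⁻¹‖ |v ∘ T|` pointwise. Changing variables multiplies both
sides by `|det J|`, and `‖J⁻¹‖ ≤ diam K̂ / ρ_K ≤ √2 / ρ_K`, because `T⁻¹` maps two antipodal points
of the inscribed ball, at distance `ρ_K`, to two points of `K̂`.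
-/

section

open MvPolynomial

theorem MvPolynomial.totalDegree_aeval_le {R σ τ : Type*} [CommSemiring R]
    (f : σ → MvPolynomial τ R) {k : ℕ} (hf : ∀ i, (f i).totalDegree ≤ k) (P : MvPolynomial σ R) :
    (aeval f P).totalDegree ≤ P.totalDegree * k := by
  rw [aeval_def, eval₂_eq]
  refine totalDegree_finsetSum_le fun m hm => ?_
  calc (C (algebraMap R R (P.coeff m)) * ∏ i ∈ m.support, f i ^ m i).totalDegree
      ≤ 0 + ∑ i ∈ m.support, (f i ^ m i).totalDegree :=
        (totalDegree_mul _ _).trans (add_le_add (totalDegree_C _).le (totalDegree_finsetProd _ _))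
    _ ≤ ∑ i ∈ m.support, m i * k := by
        rw [zero_add]
        exact sum_le_sum fun i _ => (totalDegree_pow _ _).trans (Nat.mul_le_mul_left _ (hf i))
    _ = (m.sum fun _ e => e) * k := by rw [Finsupp.sum, sum_mul]
    _ ≤ P.totalDegree * k := Nat.mul_le_mul_right _ (le_totalDegree hm)

theorem MvPolynomial.eval_aeval {R σ τ : Type*} [CommSemiring R] (f : σ → MvPolynomial τ R)
    (P : MvPolynomial σ R) (x : τ → R) :
    eval x (aeval f P) = eval (fun l => eval x (f l)) P := by
  rw [aeval_def, eval_eval₂, algebraMap_eq, ← eval₂_id]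
  congr 1
  ext; simp

theorem setIntegral_image_affine {E G : Type*} [NormedAddCommGroup E] [NormedSpace ℝ E]
    [FiniteDimensional ℝ E] [MeasurableSpace E] [BorelSpace E] (μ : Measure E)
    [μ.IsAddHaarMeasure] [NormedAddCommGroup G] [NormedSpace ℝ G] (J : E ≃L[ℝ] E) (c : E)
    {s : Set E} (hs : MeasurableSet s) (g : E → G) :
    ∫ x in (fun x => J x + c) '' s, g x ∂μ =
      |(J : E →L[ℝ] E).det| • ∫ x in s, g (J x + c) ∂μ := by
  rw [integral_image_eq_integral_abs_det_fderiv_smul μ hs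
    (fun x _ => (J.hasFDerivAt.add_const c).hasFDerivWithinAt)
    (fun a _ b _ h => J.injective (add_right_cancel h))]
  exact integral_smul _ _

theorem ContinuousLinearEquiv.norm_symm_le_diam_div_of_closedBall_subset
    {E F : Type*} [NormedAddCommGroup E] [NormedSpace ℝ E] [NormedAddCommGroup F]
    [NormedSpace ℝ F] (J : E ≃L[ℝ] F) (c : F) {S : Set E} (hS : Bornology.IsBounded S)
    {z : F} {r : ℝ} (hr : 0 < r) (hball : Metric.closedBall z r ⊆ (fun x => J x + c) '' S) :
    ‖(J.symm : F →L[ℝ] E)‖ ≤ Metric.diam S / (2 * r) := by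
  refine ContinuousLinearMap.opNorm_le_of_unit_norm
    (div_nonneg Metric.diam_nonneg (by positivity)) fun u hu => ?_
  obtain ⟨a, ha, hau : J a + c = z + r • u⟩ := hball (show z + r • u ∈ Metric.closedBall z r by
    simp [norm_smul, hu, abs_of_pos hr])
  obtain ⟨b, hb, hbu : J b + c = z - r • u⟩ := hball (show z - r • u ∈ Metric.closedBall z r by
    simp [norm_smul, hu, abs_of_pos hr])
  have hab : a - b = (2 * r) • J.symm u := by
    apply J.injective
    rw [map_sub, map_smul, J.apply_symm_apply]
    have : J a - J b = (J a + c) - (J b + c) := by abel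
    rw [this, hau, hbu]
    module
  have hdist : 2 * r * ‖J.symm u‖ ≤ Metric.diam S := by
    have := Metric.dist_le_diam_of_mem hS ha hb
    rwa [dist_eq_norm, hab, norm_smul, Real.norm_of_nonneg (by positivity)] at this
  rw [ContinuousLinearEquiv.coe_coe, le_div_iff₀ (by positivity)]
  linarith

variable {d : ℕ}

local notation "ℝᵈ" => EuclideanSpace ℝ (Fin d)

theorem hasFDerivAt_eval_euclidean (P : MvPolynomial (Fin d) ℝ) (x : ℝᵈ) :
    HasFDerivAt (fun y : ℝᵈ => eval (fun j => y j) P)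
      (∑ i, eval (fun j => x j) (pderiv i P) • EuclideanSpace.proj (𝕜 := ℝ) i) x := by
  induction P using MvPolynomial.induction_on with
  | C a => simpa using hasFDerivAt_const a x
  | add p q hp hq =>
    simp only [map_add, add_smul, sum_add_distrib]
    exact hp.add hq
  | mul_X p n hp =>
    simp only [eval_mul, eval_X]
    refine (hp.mul (PiLp.hasFDerivAt_apply 2 x n)).congr_fderiv ?_
    ext u
    simp [Pi.single_apply, apply_ite, mul_add, sum_add_distrib, mul_sum, mul_comm, mul_left_comm]

theorem pdivE_eq_sum_of_hasFDerivAt {v : ℝᵈ → ℝᵈ} {x : ℝᵈ} {φ : Fin d → ℝᵈ →L[ℝ] ℝ}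
    (hφ : ∀ i, HasFDerivAt (fun y => v y i) (φ i) x) :
    pdivE d v x = ∑ i, φ i (EuclideanSpace.single i 1) := by
  have hv : DifferentiableAt ℝ v x :=
    differentiableAt_euclidean.2 fun i => (hφ i).differentiableAt
  refine sum_congr rfl fun i _ => ?_
  have hvi := (PiLp.hasFDerivAt_apply 2 (v x) i).comp x hv.hasFDerivAt
  rw [(hφ i).unique hvi]
  rfl

theorem pdivE_eq_sum_pderiv {v : ℝᵈ → ℝᵈ} {w : Fin d → MvPolynomial (Fin d) ℝ}
    (hw : ∀ x i, v x i = eval (fun j => x j) (w i)) (x : ℝᵈ) :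
    pdivE d v x = ∑ i, eval (fun j => x j) (pderiv i (w i)) := by
  rw [pdivE_eq_sum_of_hasFDerivAt fun i =>
    (hasFDerivAt_eval_euclidean (w i) x).congr_of_eventuallyEq (.of_forall fun y => hw y i)]
  simp [PiLp.single_apply]

theorem pdivE_eq_trace (v : ℝᵈ → ℝᵈ) (x : ℝᵈ) :
    pdivE d v x = LinearMap.trace ℝ ℝᵈ (fderiv ℝ v x) := by
  rw [LinearMap.trace_eq_matrix_trace ℝ (EuclideanSpace.basisFun (Fin d) ℝ).toBasis, Matrix.trace]
  simp [LinearMap.toMatrix_apply, pdivE]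

theorem pdivE_comp_affine (J : ℝᵈ ≃L[ℝ] ℝᵈ) (c : ℝᵈ) {v : ℝᵈ → ℝᵈ} {x : ℝᵈ}
    (hv : DifferentiableAt ℝ v (J x + c)) :
    pdivE d (fun y => J.symm (v (J y + c))) x = pdivE d v (J x + c) := by
  have hT : HasFDerivAt (fun y => J y + c) (J : ℝᵈ →L[ℝ] ℝᵈ) x := J.hasFDerivAt.add_const c
  have hF : HasFDerivAt (fun y => J.symm (v (J y + c)))
      ((J.symm : ℝᵈ →L[ℝ] ℝᵈ).comp ((fderiv ℝ v (J x + c)).comp J)) x :=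
    J.symm.hasFDerivAt.comp x (hv.hasFDerivAt.comp x hT)
  rw [pdivE_eq_trace, pdivE_eq_trace, hF.fderiv]
  exact LinearMap.trace_conj' (fderiv ℝ v (J x + c) : ℝᵈ →ₗ[ℝ] ℝᵈ) J.symm.toLinearEquiv

theorem apply_eq_sum_mul_apply_single (L : ℝᵈ →L[ℝ] ℝᵈ) (x : ℝᵈ) (l : Fin d) :
    L x l = ∑ m, x m * L (EuclideanSpace.single m 1) l := by
  conv_lhs => rw [← (EuclideanSpace.basisFun (Fin d) ℝ).sum_repr x]
  simp

def IsPolynomialVectorField (n : ℕ) (v : ℝᵈ → ℝᵈ) : Prop :=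
  ∃ w : Fin d → MvPolynomial (Fin d) ℝ, (∀ i, (w i).totalDegree ≤ n) ∧
    ∀ x i, v x i = eval (fun j => x j) (w i)

namespace IsPolynomialVectorField

variable {n : ℕ} {v : EuclideanSpace ℝ (Fin d) → EuclideanSpace ℝ (Fin d)}

theorem differentiable (hv : IsPolynomialVectorField n v) : Differentiable ℝ v := by
  obtain ⟨w, -, hw⟩ := hv
  refine differentiable_euclidean.2 fun i x => ?_
  exact ((hasFDerivAt_eval_euclidean (w i) x).congr_of_eventuallyEq
    (.of_forall fun y => hw y i)).differentiableAt

theorem clm_comp (hv : IsPolynomialVectorField n v) (L : ℝᵈ →L[ℝ] ℝᵈ) :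
    IsPolynomialVectorField n (fun x => L (v x)) := by
  obtain ⟨w, hdeg, hw⟩ := hv
  refine ⟨fun j => ∑ k, L (EuclideanSpace.single k 1) j • w k,
    fun j => totalDegree_finsetSum_le fun k _ => (totalDegree_smul_le _ _).trans (hdeg k),
    fun x j => ?_⟩
  simp [apply_eq_sum_mul_apply_single L (v x) j, hw, smul_eval, mul_comm]

theorem comp_affine (hv : IsPolynomialVectorField n v) (A : ℝᵈ →L[ℝ] ℝᵈ) (c : ℝᵈ) :
    IsPolynomialVectorField n (fun x => v (A x + c)) := by
  obtain ⟨w, hdeg, hw⟩ := hv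
  set a : Fin d → MvPolynomial (Fin d) ℝ :=
    fun l => C (c l) + ∑ m, A (EuclideanSpace.single m 1) l • X m
  have ha_deg (l : Fin d) : (a l).totalDegree ≤ 1 := by
    refine (totalDegree_add _ _).trans (max_le (by simp) ?_)
    exact totalDegree_finsetSum_le fun m _ => (totalDegree_smul_le _ _).trans (totalDegree_X m).le
  have ha_eval (x : ℝᵈ) : (fun l => eval (fun j => x j) (a l)) = fun l => (A x + c) l := by
    ext l
    simp [a, apply_eq_sum_mul_apply_single A x l, smul_eval, add_comm, mul_comm]
  refine ⟨fun i => aeval a (w i), fun i => ?_, fun x i => ?_⟩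
  · exact (totalDegree_aeval_le a ha_deg (w i)).trans ((mul_one _).trans_le (hdeg i))
  · rw [eval_aeval, ha_eval, hw]

end IsPolynomialVectorField

def IsRTN (p : ℕ) (v : ℝᵈ → ℝᵈ) : Prop :=
  ∃ (P : Fin d → MvPolynomial (Fin d) ℝ) (q : MvPolynomial (Fin d) ℝ),
    (∀ i, (P i).totalDegree ≤ p) ∧ q.totalDegree ≤ p ∧
    ∀ x i, v x i = eval (fun j => x j) (P i) + eval (fun j => x j) q * x i

theorem IsRTN.isPolynomialVectorField {p : ℕ} {v : ℝᵈ → ℝᵈ} (hv : IsRTN p v) :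
    IsPolynomialVectorField (p + 1) v := by
  obtain ⟨P, q, hP, hq, hPq⟩ := hv
  refine ⟨fun i => P i + q * X i, fun i => ?_, fun x i => by simp [hPq]⟩
  refine (totalDegree_add _ _).trans (max_le ((hP i).trans p.le_succ) ?_)
  exact (totalDegree_mul _ _).trans (by rw [totalDegree_X]; omega)

theorem dist_le_sqrt_two_of_mem_unitSimplexE {x y : ℝᵈ} (hx : x ∈ unitSimplexE d)
    (hy : y ∈ unitSimplexE d) : dist x y ≤ √2 := by
  have hsq {z : ℝᵈ} (hz : z ∈ unitSimplexE d) : ∑ i, z i ^ 2 ≤ 1 :=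
    (sum_sq_le_sq_sum_of_nonneg fun i _ => hz.1 i).trans
      (pow_le_one₀ (sum_nonneg fun i _ => hz.1 i) hz.2)
  rw [EuclideanSpace.dist_eq]
  refine Real.sqrt_le_sqrt ?_
  calc ∑ i, dist (x i) (y i) ^ 2 ≤ ∑ i, (x i ^ 2 + y i ^ 2) := by
        refine sum_le_sum fun i _ => ?_
        rw [Real.dist_eq, sq_abs]
        nlinarith [hx.1 i, hy.1 i]
    _ ≤ 2 := by rw [sum_add_distrib]; linarith [hsq hx, hsq hy]

theorem isCompact_unitSimplexE : IsCompact (unitSimplexE d) := by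
  have hcoord (i : Fin d) : Continuous fun x : ℝᵈ => x i := (EuclideanSpace.proj i).continuous
  have hclosed : IsClosed (unitSimplexE d) := by
    simp only [unitSimplexE, Set.ofPred_and, Set.ofPred_forall]
    exact (isClosed_iInter fun i => isClosed_le continuous_const (hcoord i)).inter
      (isClosed_le (continuous_finsetSum _ fun i _ => hcoord i) continuous_const)
  exact Metric.isCompact_of_isClosed_isBounded hclosed
    (Metric.isBounded_iff.2 ⟨√2, fun x hx y hy => dist_le_sqrt_two_of_mem_unitSimplexE hx hy⟩)

theorem diam_unitSimplexE_le : Metric.diam (unitSimplexE d) ≤ √2 :=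
  Metric.diam_le_of_forall_dist_le (Real.sqrt_nonneg 2) fun _ hx _ hy =>
    dist_le_sqrt_two_of_mem_unitSimplexE hx hy

theorem norm_symm_le_sqrt_two_div_of_closedBall_subset (J : ℝᵈ ≃L[ℝ] ℝᵈ) (c : ℝᵈ) {z : ℝᵈ}
    {ρ : ℝ} (hρ : 0 < ρ)
    (hball : Metric.closedBall z (ρ / 2) ⊆ (fun x => J x + c) '' unitSimplexE d) :
    ‖(J.symm : ℝᵈ →L[ℝ] ℝᵈ)‖ ≤ √2 / ρ := by
  have h := J.norm_symm_le_diam_div_of_closedBall_subset c isCompact_unitSimplexE.isBounded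
    (half_pos hρ) hball
  rw [mul_div_cancel₀ _ two_ne_zero] at h
  exact h.trans (by gcongr; exact diam_unitSimplexE_le)

def PolynomialInverseInequality (S : Set ℝᵈ) (n : ℕ) (C : ℝ) : Prop :=
  ∀ w : MvPolynomial (Fin d) ℝ, w.totalDegree ≤ n → ∀ i : Fin d,
    √(∫ x in S, (eval (fun j => x j) (pderiv i w)) ^ 2) ≤
      C * √(∫ x in S, (eval (fun j => x j) w) ^ 2)

theorem IsPolynomialVectorField.integral_pdivE_sq_le {S : Set ℝᵈ} (hS : IsCompact S) {n : ℕ}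
    {C : ℝ} (hinv : PolynomialInverseInequality S n C)
    {v : ℝᵈ → ℝᵈ} (hv : IsPolynomialVectorField n v) :
    ∫ x in S, pdivE d v x ^ 2 ≤ d * C ^ 2 * ∫ x in S, ‖v x‖ ^ 2 := by
  obtain ⟨w, hdeg, hw⟩ := hv
  set g : Fin d → ℝᵈ → ℝ := fun i x => eval (fun j => x j) (pderiv i (w i))
  have hint {f : ℝᵈ → ℝ} (hf : Continuous f) : Integrable f (volume.restrict S) :=
    hf.continuousOn.integrableOn_compact hS
  have hg (i : Fin d) : Continuous (g i) := (continuous_eval _).comp (PiLp.continuous_ofLp _ _)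
  have hvi (i : Fin d) : Continuous fun x => v x i := by
    simp only [hw]
    exact (continuous_eval (w i)).comp (PiLp.continuous_ofLp _ _)
  have hcomp (i : Fin d) : ∫ x in S, g i x ^ 2 ≤ C ^ 2 * ∫ x in S, v x i ^ 2 := by
    have h := hinv (w i) (hdeg i) i
    simp only [← hw] at h
    have h0 : 0 ≤ ∫ x in S, g i x ^ 2 := integral_nonneg fun x => sq_nonneg _
    have h1 : 0 ≤ ∫ x in S, v x i ^ 2 := integral_nonneg fun x => sq_nonneg _
    calc ∫ x in S, g i x ^ 2 = √(∫ x in S, g i x ^ 2) ^ 2 := (sq_sqrt h0).symm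
      _ ≤ (C * √(∫ x in S, v x i ^ 2)) ^ 2 := pow_le_pow_left₀ (sqrt_nonneg _) h 2
      _ = C ^ 2 * ∫ x in S, v x i ^ 2 := by rw [mul_pow, sq_sqrt h1]
  calc ∫ x in S, pdivE d v x ^ 2 = ∫ x in S, (∑ i, g i x) ^ 2 := by
        simp only [pdivE_eq_sum_pderiv hw, g]
    _ ≤ ∫ x in S, d * ∑ i, g i x ^ 2 :=
        integral_mono (hint ((continuous_finsetSum _ fun i _ => hg i).pow 2))
          (hint (continuous_const.mul (continuous_finsetSum _ fun i _ => (hg i).pow 2)))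
          fun x => by simpa using sq_sum_le_card_mul_sum_sq (s := univ) (f := fun i => g i x)
    _ = d * ∑ i, ∫ x in S, g i x ^ 2 := by
        rw [integral_const_mul, integral_finsetSum univ (f := fun i x => g i x ^ 2)
          fun i _ => hint ((hg i).pow 2)]
    _ ≤ d * ∑ i, C ^ 2 * ∫ x in S, v x i ^ 2 := by gcongr with i; exact hcomp i
    _ = d * C ^ 2 * ∫ x in S, ‖v x‖ ^ 2 := by
        rw [mul_assoc, ← mul_sum, ← integral_finsetSum univ (f := fun i x => v x i ^ 2)
          fun i _ => hint ((hvi i).pow 2)]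
        simp only [EuclideanSpace.norm_sq_eq, Real.norm_eq_abs, sq_abs]

theorem IsPolynomialVectorField.integral_pdivE_sq_image_le (J : ℝᵈ ≃L[ℝ] ℝᵈ) (c : ℝᵈ)
    {S : Set ℝᵈ} (hS : IsCompact S) {n : ℕ} {C : ℝ}
    (hinv : PolynomialInverseInequality S n C)
    {v : ℝᵈ → ℝᵈ} (hv : IsPolynomialVectorField n v) :
    ∫ x in (fun x => J x + c) '' S, pdivE d v x ^ 2 ≤
      d * C ^ 2 * ‖(J.symm : ℝᵈ →L[ℝ] ℝᵈ)‖ ^ 2 * ∫ x in (fun x => J x + c) '' S, ‖v x‖ ^ 2 := by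
  set F : ℝᵈ → ℝᵈ := fun x => J.symm (v (J x + c))
  have hF : IsPolynomialVectorField n F := (hv.comp_affine J c).clm_comp J.symm
  have hdiv (x : ℝᵈ) : pdivE d F x = pdivE d v (J x + c) :=
    pdivE_comp_affine J c (hv.differentiable _)
  have hpiola : ∫ x in S, ‖F x‖ ^ 2 ≤
      ‖(J.symm : ℝᵈ →L[ℝ] ℝᵈ)‖ ^ 2 * ∫ x in S, ‖v (J x + c)‖ ^ 2 := by
    have hint {f : ℝᵈ → ℝ} (hf : Continuous f) : Integrable f (volume.restrict S) :=
      hf.continuousOn.integrableOn_compact hS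
    rw [← integral_const_mul]
    refine integral_mono (hint (hF.differentiable.continuous.norm.pow 2))
      (hint (continuous_const.mul ((hv.differentiable.continuous.comp
        (J.continuous.add continuous_const)).norm.pow 2))) fun x => ?_
    rw [← mul_pow]
    exact pow_le_pow_left₀ (norm_nonneg _) ((J.symm : ℝᵈ →L[ℝ] ℝᵈ).le_opNorm _) 2
  rw [setIntegral_image_affine volume J c hS.measurableSet,
    setIntegral_image_affine volume J c hS.measurableSet, smul_eq_mul, smul_eq_mul]
  simp only [← hdiv]
  calc |(J : ℝᵈ →L[ℝ] ℝᵈ).det| * ∫ x in S, pdivE d F x ^ 2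
      ≤ |(J : ℝᵈ →L[ℝ] ℝᵈ).det| * (d * C ^ 2 * ∫ x in S, ‖F x‖ ^ 2) := by
        gcongr; exact hF.integral_pdivE_sq_le hS hinv
    _ ≤ |(J : ℝᵈ →L[ℝ] ℝᵈ).det| * (d * C ^ 2 *
          (‖(J.symm : ℝᵈ →L[ℝ] ℝᵈ)‖ ^ 2 * ∫ x in S, ‖v (J x + c)‖ ^ 2)) := by gcongr
    _ = _ := by ring

end

theorem divergence_inverse_inequality_simplex_general (d p : ℕ)
    (J : EuclideanSpace ℝ (Fin d) ≃L[ℝ] EuclideanSpace ℝ (Fin d))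
    (c : EuclideanSpace ℝ (Fin d))
    (K : Set (EuclideanSpace ℝ (Fin d)))
    (hKdef : K = (fun xh => J xh + c) '' unitSimplexE d)
    (hK ρK ϑ C : ℝ) (hhK : Metric.diam K = hK) (hρ : 0 < ρK)
    (hball : ∃ z, Metric.closedBall z (ρK / 2) ⊆ K)
    (hratio : hK / ρK ≤ ϑ) (hC : 0 ≤ C)
    -- inverse inequality on the unit simplex for degree `≤ p+1` scalar polynomials
    (hinv : ∀ w : MvPolynomial (Fin d) ℝ, w.totalDegree ≤ p + 1 → ∀ i : Fin d,
      Real.sqrt (∫ x in unitSimplexE d,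
          (MvPolynomial.eval (fun j => x j) (MvPolynomial.pderiv i w)) ^ 2) ≤
        C * Real.sqrt (∫ x in unitSimplexE d, (MvPolynomial.eval (fun j => x j) w) ^ 2))
    (v : EuclideanSpace ℝ (Fin d) → EuclideanSpace ℝ (Fin d))
    -- `v ∈ RTN_p(K) = ℙ_p(K;ℝ^d) + ℙ_p(K)x`
    (hv : ∃ (P : Fin d → MvPolynomial (Fin d) ℝ) (q : MvPolynomial (Fin d) ℝ),
      (∀ i, (P i).totalDegree ≤ p) ∧ q.totalDegree ≤ p ∧
      ∀ x i, v x i = MvPolynomial.eval (fun j => x j) (P i) +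
        MvPolynomial.eval (fun j => x j) q * x i) :
    hK * Real.sqrt (∫ x in K, (pdivE d v x) ^ 2) ≤
      Real.sqrt (2 * d) * ϑ * C * Real.sqrt (∫ x in K, ‖v x‖ ^ 2) := by
  obtain ⟨z, hz⟩ := hball
  rw [hKdef] at hz
  set N := ‖(J.symm : EuclideanSpace ℝ (Fin d) →L[ℝ] EuclideanSpace ℝ (Fin d))‖
  have hK0 : 0 ≤ hK := hhK ▸ Metric.diam_nonneg
  have hN : hK * N ≤ √2 * ϑ :=
    calc hK * N ≤ hK * (√2 / ρK) := by
          gcongr; exact norm_symm_le_sqrt_two_div_of_closedBall_subset J c hρ hz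
      _ = √2 * (hK / ρK) := by ring
      _ ≤ √2 * ϑ := by gcongr
  have hsq := (IsRTN.isPolynomialVectorField hv).integral_pdivE_sq_image_le J c
    isCompact_unitSimplexE hinv
  rw [← hKdef] at hsq
  calc hK * √(∫ x in K, pdivE d v x ^ 2)
      ≤ hK * √(d * C ^ 2 * N ^ 2 * ∫ x in K, ‖v x‖ ^ 2) := by gcongr
    _ = √d * C * (hK * N) * √(∫ x in K, ‖v x‖ ^ 2) := by
        rw [sqrt_mul' _ (integral_nonneg fun x => sq_nonneg _), sqrt_mul (by positivity),
          sqrt_mul (by positivity), sqrt_sq hC, sqrt_sq (norm_nonneg _)]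
        ring
    _ ≤ √d * C * (√2 * ϑ) * √(∫ x in K, ‖v x‖ ^ 2) := by gcongr
    _ = √(2 * d) * ϑ * C * √(∫ x in K, ‖v x‖ ^ 2) := by
        rw [sqrt_mul zero_le_two]
        ring

/-- Inverse inequality for the divergence on a general simplex `K = T(K̂)` (`T` affine,
invertible) of diameter `h_K`, containing a ball of diameter `ρ_K` with `h_K/ρ_K ≤ ϑ`:
if the inverse inequality with constant `C` holds on the unit simplex for scalar polynomials
of total degree `≤ p+1`, then `h_K ‖div v‖_{L²(K)} ≤ √(2d) ϑ C ‖v‖_{L²(K)}` for every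
`v ∈ RTN_p(K)`. -/
theorem divergence_inverse_inequality_simplex (d p : ℕ) (hd : 1 ≤ d)
    (J : EuclideanSpace ℝ (Fin d) ≃L[ℝ] EuclideanSpace ℝ (Fin d))
    (c : EuclideanSpace ℝ (Fin d))
    (K : Set (EuclideanSpace ℝ (Fin d)))
    (hKdef : K = (fun xh => J xh + c) '' unitSimplexE d)
    (hK ρK ϑ C : ℝ) (hhK : Metric.diam K = hK) (hρ : 0 < ρK)
    (hball : ∃ z, Metric.closedBall z (ρK / 2) ⊆ K)
    (hratio : hK / ρK ≤ ϑ) (hC : 0 ≤ C)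
    -- inverse inequality on the unit simplex for degree `≤ p+1` scalar polynomials
    (hinv : ∀ w : MvPolynomial (Fin d) ℝ, w.totalDegree ≤ p + 1 → ∀ i : Fin d,
      Real.sqrt (∫ x in unitSimplexE d,
          (MvPolynomial.eval (fun j => x j) (MvPolynomial.pderiv i w)) ^ 2) ≤
        C * Real.sqrt (∫ x in unitSimplexE d, (MvPolynomial.eval (fun j => x j) w) ^ 2))
    (v : EuclideanSpace ℝ (Fin d) → EuclideanSpace ℝ (Fin d))
    -- `v ∈ RTN_p(K) = ℙ_p(K;ℝ^d) + ℙ_p(K)x`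
    (hv : ∃ (P : Fin d → MvPolynomial (Fin d) ℝ) (q : MvPolynomial (Fin d) ℝ),
      (∀ i, (P i).totalDegree ≤ p) ∧ q.totalDegree ≤ p ∧
      ∀ x i, v x i = MvPolynomial.eval (fun j => x j) (P i) +
        MvPolynomial.eval (fun j => x j) q * x i) :
    hK * Real.sqrt (∫ x in K, (pdivE d v x) ^ 2) ≤
      Real.sqrt (2 * d) * ϑ * C * Real.sqrt (∫ x in K, ‖v x‖ ^ 2) :=
  divergence_inverse_inequality_simplex_general d p J c K hKdef hK ρK ϑ C hhK hρ hball hratio hC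
    hinv v hv

end
end

section
/- Let v be a polynomial of total degree at most p on the unit simplex K^d in ℝ^d, d ≥ 2, and suppose the inverse inequality with constant C_{p,d−1} holds on the (d−1)-dimensional unit simplex for degree-p polynomials. Then on K_* = {x ∈ K^d : x_d < 1 − 1/d} one has ‖∂v/∂x_1‖²_{L²(K_*)} ≤ d² C_{p,d−1}² ‖v‖²_{L²(K_*)}. -/
/-!
Slice `K_*` by the hyperplanes `x_d = s`, `0 ≤ s < 1 - 1/d`. Each slice is the simplex
`K^{d-1}_{1-s}`, on which `v` restricts to a polynomial of degree `≤ p` in `x_1, …, x_{d-1}`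
whose `x_1`-derivative is the restriction of `∂v/∂x_1`. Rescaling the inverse inequality from
`K^{d-1}` to `K^{d-1}_t` costs a factor `t⁻²`, which is at most `d²` because
`t = 1 - s ≥ 1/d`; integrating over `s` (Tonelli) gives the claim.
-/

open MeasureTheory Real Finset

namespace MvPolynomial

variable {R σ τ : Type*} [CommSemiring R]

theorem pderiv_aeval [Fintype σ] (f : σ → MvPolynomial τ R) (i : τ) (q : MvPolynomial σ R) :
    pderiv i (aeval f q) = ∑ j, aeval f (pderiv j q) * pderiv i (f j) := by
  classical
  induction q using MvPolynomial.induction_on with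
  | C a => simp
  | add p q hp hq => simp only [map_add, hp, hq, add_mul, Finset.sum_add_distrib]
  | mul_X p k hp =>
    simp only [map_mul, aeval_X, Derivation.leibniz, smul_eq_mul, hp, map_add, add_mul,
      Finset.sum_add_distrib, Finset.mul_sum, pderiv_X, Pi.single_apply, mul_ite, mul_one,
      mul_zero, apply_ite (aeval f), map_zero, ite_mul, zero_mul, Finset.sum_ite_eq,
      Finset.mem_univ, if_true]
    simp only [mul_assoc]

theorem totalDegree_aeval_le_s18 {k : ℕ} (f : σ → MvPolynomial τ R)
    (hf : ∀ j, (f j).totalDegree ≤ k) (q : MvPolynomial σ R) :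
    (aeval f q).totalDegree ≤ k * q.totalDegree := by
  conv_lhs => rw [q.as_sum, map_sum]
  refine totalDegree_finsetSum_le fun m hm => ?_
  rw [aeval_monomial, algebraMap_eq]
  refine (totalDegree_mul _ _).trans ?_
  rw [totalDegree_C, zero_add]
  refine (totalDegree_finsetProd _ _).trans ?_
  calc ∑ j ∈ m.support, (f j ^ m j).totalDegree
      ≤ ∑ j ∈ m.support, k * m j := Finset.sum_le_sum fun j _ =>
        (totalDegree_pow _ _).trans (by rw [mul_comm]; exact Nat.mul_le_mul_right _ (hf j))
    _ = k * m.sum fun _ e => e := by rw [Finsupp.sum, Finset.mul_sum]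
    _ ≤ k * q.totalDegree := Nat.mul_le_mul_left k (le_totalDegree hm)

theorem eval_aeval_s18 (f : σ → MvPolynomial τ R) (z : τ → R) (q : MvPolynomial σ R) :
    eval z (aeval f q) = eval (fun j => eval z (f j)) q :=
  eval₂Hom_bind₁ _ _ _ _

theorem totalDegree_X_le (j : σ) : (X j : MvPolynomial σ R).totalDegree ≤ 1 :=
  (totalDegree_monomial_le _ _).trans (by simp)

theorem totalDegree_C_mul_X_le (t : R) (j : σ) :
    (C t * X j : MvPolynomial σ R).totalDegree ≤ 1 := by
  rw [C_mul_X_eq_monomial]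
  exact (totalDegree_monomial_le _ _).trans (by simp)

noncomputable def scaleVars (t : R) : MvPolynomial σ R →ₐ[R] MvPolynomial σ R :=
  aeval fun j => C t * X j

theorem eval_scaleVars (t : R) (z : σ → R) (q : MvPolynomial σ R) :
    eval z (scaleVars t q) = eval (t • z) q := by
  rw [scaleVars, eval_aeval_s18]
  congr
  ext j
  simp

theorem pderiv_scaleVars [Fintype σ] (t : R) (i : σ) (q : MvPolynomial σ R) :
    pderiv i (scaleVars t q) = C t * scaleVars t (pderiv i q) := by
  classical
  rw [scaleVars, pderiv_aeval]
  simp [pderiv_X, Pi.single_apply, mul_comm]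

theorem totalDegree_scaleVars_le (t : R) (q : MvPolynomial σ R) :
    (scaleVars t q).totalDegree ≤ q.totalDegree :=
  (totalDegree_aeval_le_s18 _ (totalDegree_C_mul_X_le t) q).trans (one_mul _).le

variable {n : ℕ}

noncomputable def restrictLast (s : R) :
    MvPolynomial (Fin (n + 1)) R →ₐ[R] MvPolynomial (Fin n) R :=
  aeval (Fin.snoc X (C s))

theorem eval_restrictLast (s : R) (y : Fin n → R) (q : MvPolynomial (Fin (n + 1)) R) :
    eval y (restrictLast s q) = eval (Fin.snoc y s) q := by
  rw [restrictLast, eval_aeval_s18]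
  congr
  funext j
  refine Fin.lastCases ?_ (fun k => ?_) j <;> simp

theorem pderiv_restrictLast (s : R) (i : Fin n) (q : MvPolynomial (Fin (n + 1)) R) :
    pderiv i (restrictLast s q) = restrictLast s (pderiv i.castSucc q) := by
  classical
  rw [restrictLast, pderiv_aeval]
  simp [Fin.sum_univ_castSucc, pderiv_X, Pi.single_apply]

theorem totalDegree_restrictLast_le (s : R) (q : MvPolynomial (Fin (n + 1)) R) :
    (restrictLast s q).totalDegree ≤ q.totalDegree := by
  refine (totalDegree_aeval_le_s18 _ (fun j => ?_) q).trans (one_mul _).le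
  refine Fin.lastCases ?_ (fun k => ?_) j <;> simp [totalDegree_X_le]

end MvPolynomial

open MvPolynomial ENNReal Set
open scoped Pointwise

/-- `K^d_t`, the simplex of side length `t`. -/
def scaledSimplex (d : ℕ) (t : ℝ) : Set (Fin d → ℝ) :=
  {x | (∀ i, 0 ≤ x i) ∧ ∑ i, x i ≤ t}

theorem scaledSimplex_one (d : ℕ) : scaledSimplex d 1 = unitSimplex d := rfl

theorem isClosed_scaledSimplex (d : ℕ) (t : ℝ) : IsClosed (scaledSimplex d t) := by
  simp only [scaledSimplex, ofPred_and, ofPred_forall]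
  exact (isClosed_iInter fun i => isClosed_le continuous_const (continuous_apply i)).inter
    (isClosed_le (continuous_finsetSum _ fun i _ => continuous_apply i) continuous_const)

theorem measurableSet_scaledSimplex (d : ℕ) (t : ℝ) : MeasurableSet (scaledSimplex d t) :=
  (isClosed_scaledSimplex d t).measurableSet

theorem scaledSimplex_subset_closedBall (d : ℕ) (t : ℝ) :
    scaledSimplex d t ⊆ Metric.closedBall 0 |t| := by
  rintro x ⟨hx, hsum⟩
  rw [Metric.mem_closedBall, dist_zero_right, pi_norm_le_iff_of_nonneg (abs_nonneg t)]
  intro i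
  rw [Real.norm_eq_abs, abs_of_nonneg (hx i)]
  exact ((Finset.single_le_sum (fun j _ => hx j) (Finset.mem_univ i)).trans hsum).trans
    (le_abs_self t)

theorem isCompact_scaledSimplex (d : ℕ) (t : ℝ) : IsCompact (scaledSimplex d t) :=
  Metric.isCompact_of_isClosed_isBounded (isClosed_scaledSimplex d t)
    (Metric.isBounded_closedBall.subset (scaledSimplex_subset_closedBall d t))

theorem smul_unitSimplex {d : ℕ} {t : ℝ} (ht : 0 < t) :
    t • unitSimplex d = scaledSimplex d t := by
  ext y
  rw [mem_smul_set_iff_inv_smul_mem₀ ht.ne']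
  simp only [unitSimplex, scaledSimplex, mem_ofPred_eq, Pi.smul_apply, smul_eq_mul,
    ← Finset.mul_sum, inv_mul_le_one₀ ht]
  simp [ht]

theorem snoc_mem_scaledSimplex_iff {n : ℕ} {t s : ℝ} {y : Fin n → ℝ} :
    (Fin.snoc y s : Fin (n + 1) → ℝ) ∈ scaledSimplex (n + 1) t ↔
      0 ≤ s ∧ y ∈ scaledSimplex n (t - s) := by
  simp only [scaledSimplex, mem_ofPred_eq, Fin.forall_fin_succ', Fin.snoc_castSucc, Fin.snoc_last,
    Fin.sum_univ_castSucc, le_sub_iff_add_le]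
  tauto

theorem setIntegral_scaledSimplex {d : ℕ} {t : ℝ} (ht : 0 < t) (g : (Fin d → ℝ) → ℝ) :
    ∫ y in scaledSimplex d t, g y = t ^ d * ∫ z in unitSimplex d, g (t • z) := by
  rw [Measure.setIntegral_comp_smul_of_pos _ _ _ ht, smul_unitSimplex ht, smul_eq_mul,
    Module.finrank_fin_fun, mul_inv_cancel_left₀ (by positivity)]

theorem lintegral_eq_lintegral_snoc {n : ℕ} {F : (Fin (n + 1) → ℝ) → ℝ≥0∞}
    (hF : Measurable F) :
    ∫⁻ x, F x = ∫⁻ s, ∫⁻ y, F (Fin.snoc y s) := by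
  let e := MeasurableEquiv.piFinSuccAbove (fun _ : Fin (n + 1) => ℝ) (Fin.last n)
  rw [← ((volume_preserving_piFinSuccAbove _ (Fin.last n)).symm e).lintegral_comp hF,
    Measure.volume_eq_prod,
    lintegral_prod (fun z => F (e.symm z)) (hF.comp e.symm.measurable).aemeasurable]
  simp only [e, MeasurableEquiv.piFinSuccAbove_symm_apply, Fin.insertNthEquiv, Equiv.coe_fn_mk,
    Fin.insertNth_last']

theorem setLIntegral_scaledSimplex_last_lt {n : ℕ} (t a : ℝ)
    {F : (Fin (n + 1) → ℝ) → ℝ≥0∞} (hF : Measurable F) :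
    ∫⁻ x in {x ∈ scaledSimplex (n + 1) t | x (Fin.last n) < a}, F x =
      ∫⁻ s in Ico 0 a, ∫⁻ y in scaledSimplex n (t - s), F (Fin.snoc y s) := by
  have hS : MeasurableSet {x ∈ scaledSimplex (n + 1) t | x (Fin.last n) < a} :=
    (measurableSet_scaledSimplex _ t).inter
      (measurableSet_lt (measurable_pi_apply _) measurable_const)
  rw [← lintegral_indicator hS, lintegral_eq_lintegral_snoc (hF.indicator hS),
    ← lintegral_indicator measurableSet_Ico]
  have hmem : ∀ s y, (Fin.snoc y s : Fin (n + 1) → ℝ) ∈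
      {x ∈ scaledSimplex (n + 1) t | x (Fin.last n) < a} ↔
        s ∈ Ico 0 a ∧ y ∈ scaledSimplex n (t - s) := by
    intro s y
    simp only [mem_ofPred_eq, snoc_mem_scaledSimplex_iff, Fin.snoc_last, Set.mem_Ico]
    tauto
  classical
  refine lintegral_congr fun s => ?_
  by_cases hs : s ∈ Ico 0 a
  · rw [indicator_of_mem hs, ← lintegral_indicator (measurableSet_scaledSimplex _ _)]
    simp only [indicator_apply, hmem, hs, true_and]
  · simp only [indicator_of_notMem hs, indicator_apply, hmem, hs, false_and, if_false,
      lintegral_zero]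

theorem integrableOn_sq_eval {d : ℕ} {t : ℝ} {A : Set (Fin d → ℝ)}
    (hA : A ⊆ scaledSimplex d t) (q : MvPolynomial (Fin d) ℝ) :
    IntegrableOn (fun x => (eval x q) ^ 2) A :=
  (((continuous_eval q).pow 2).continuousOn.integrableOn_compact
    (isCompact_scaledSimplex d t)).mono_set hA

theorem measurable_ofReal_sq_eval {d : ℕ} (q : MvPolynomial (Fin d) ℝ) :
    Measurable fun x => ENNReal.ofReal ((eval x q) ^ 2) :=
  ((continuous_eval q).pow 2).measurable.ennreal_ofReal

theorem integral_sq_eval_le_iff_lintegral {d : ℕ} {t c : ℝ} {A : Set (Fin d → ℝ)}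
    (hA : A ⊆ scaledSimplex d t) (hc : 0 ≤ c) (q r : MvPolynomial (Fin d) ℝ) :
    ∫ x in A, (eval x q) ^ 2 ≤ c * ∫ x in A, (eval x r) ^ 2 ↔
      ∫⁻ x in A, ENNReal.ofReal ((eval x q) ^ 2) ≤
        ENNReal.ofReal c * ∫⁻ x in A, ENNReal.ofReal ((eval x r) ^ 2) := by
  have hnonneg : ∀ w : MvPolynomial (Fin d) ℝ,
      0 ≤ᵐ[volume.restrict A] fun x => (eval x w) ^ 2 :=
    fun w => ae_of_all _ fun x => sq_nonneg _
  rw [← ofReal_integral_eq_lintegral_ofReal (integrableOn_sq_eval hA q) (hnonneg q),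
    ← ofReal_integral_eq_lintegral_ofReal (integrableOn_sq_eval hA r) (hnonneg r),
    ← ENNReal.ofReal_mul hc,
    ENNReal.ofReal_le_ofReal_iff (mul_nonneg hc (integral_nonneg fun x => sq_nonneg _))]

theorem integral_sq_pderiv_scaledSimplex_le {n p : ℕ} {C t : ℝ} (ht : 0 < t) {i : Fin n}
    (hinv : ∀ w : MvPolynomial (Fin n) ℝ, w.totalDegree ≤ p →
      ∫ x in unitSimplex n, (eval x (pderiv i w)) ^ 2 ≤
        C ^ 2 * ∫ x in unitSimplex n, (eval x w) ^ 2)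
    {u : MvPolynomial (Fin n) ℝ} (hu : u.totalDegree ≤ p) :
    ∫ y in scaledSimplex n t, (eval y (pderiv i u)) ^ 2 ≤
      (C / t) ^ 2 * ∫ y in scaledSimplex n t, (eval y u) ^ 2 := by
  have hderiv : ∀ z, eval (t • z) (pderiv i u) = t⁻¹ * eval z (pderiv i (scaleVars t u)) :=
    fun z => by
      rw [pderiv_scaleVars, eval_mul, eval_C, eval_scaleVars, inv_mul_cancel_left₀ ht.ne']
  have hval : ∀ z, eval (t • z) u = eval z (scaleVars t u) :=
    fun z => (eval_scaleVars t z u).symm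
  simp_rw [setIntegral_scaledSimplex ht, hderiv, hval, mul_pow, integral_const_mul]
  set w := scaleVars t u
  calc t ^ n * (t⁻¹ ^ 2 * ∫ z in unitSimplex n, (eval z (pderiv i w)) ^ 2)
      ≤ t ^ n * (t⁻¹ ^ 2 * (C ^ 2 * ∫ z in unitSimplex n, (eval z w) ^ 2)) := by
        gcongr
        exact hinv w ((totalDegree_scaleVars_le t u).trans hu)
    _ = (C / t) ^ 2 * (t ^ n * ∫ z in unitSimplex n, (eval z w) ^ 2) := by ring

theorem lintegral_sq_pderiv_slice_le {n p : ℕ} {C t : ℝ} (ht : 0 < t) {i : Fin n}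
    (hinv : ∀ w : MvPolynomial (Fin n) ℝ, w.totalDegree ≤ p →
      ∫ x in unitSimplex n, (eval x (pderiv i w)) ^ 2 ≤
        C ^ 2 * ∫ x in unitSimplex n, (eval x w) ^ 2)
    {v : MvPolynomial (Fin (n + 1)) ℝ} (hv : v.totalDegree ≤ p) (s : ℝ) :
    ∫⁻ y in scaledSimplex n t,
        ENNReal.ofReal ((eval (Fin.snoc y s) (pderiv i.castSucc v)) ^ 2) ≤
      ENNReal.ofReal ((C / t) ^ 2) *
        ∫⁻ y in scaledSimplex n t, ENNReal.ofReal ((eval (Fin.snoc y s) v) ^ 2) := by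
  simp_rw [← eval_restrictLast, ← pderiv_restrictLast]
  rw [← integral_sq_eval_le_iff_lintegral subset_rfl (sq_nonneg _)]
  exact integral_sq_pderiv_scaledSimplex_le ht hinv ((totalDegree_restrictLast_le s v).trans hv)

theorem slicing_inverse_inequality_general (n p : ℕ) (C : ℝ)
    (hinv : ∀ w : MvPolynomial (Fin (n + 1)) ℝ, w.totalDegree ≤ p → ∀ i : Fin (n + 1),
      ∫ x in unitSimplex (n + 1), (MvPolynomial.eval x (MvPolynomial.pderiv i w)) ^ 2 ≤
        C ^ 2 * ∫ x in unitSimplex (n + 1), (MvPolynomial.eval x w) ^ 2)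
    (v : MvPolynomial (Fin (n + 2)) ℝ) (hv : v.totalDegree ≤ p) :
    ∫ x in {x ∈ unitSimplex (n + 2) | x (Fin.last (n + 1)) < 1 - 1 / (n + 2 : ℝ)},
        (MvPolynomial.eval x (MvPolynomial.pderiv 0 v)) ^ 2 ≤
      ((n + 2 : ℝ)) ^ 2 * C ^ 2 *
        ∫ x in {x ∈ unitSimplex (n + 2) | x (Fin.last (n + 1)) < 1 - 1 / (n + 2 : ℝ)},
          (MvPolynomial.eval x v) ^ 2 := by
  rw [integral_sq_eval_le_iff_lintegral (t := 1) (fun x hx => hx.1) (by positivity),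
    ← scaledSimplex_one,
    setLIntegral_scaledSimplex_last_lt _ _ (measurable_ofReal_sq_eval _),
    setLIntegral_scaledSimplex_last_lt _ _ (measurable_ofReal_sq_eval _),
    ← lintegral_const_mul' _ _ ENNReal.ofReal_ne_top]
  refine setLIntegral_mono' measurableSet_Ico fun s hs => ?_
  have hts : 1 / (n + 2 : ℝ) ≤ 1 - s := by linarith [hs.2]
  have ht : 0 < 1 - s := lt_of_lt_of_le (by positivity) hts
  calc _ ≤ ENNReal.ofReal ((C / (1 - s)) ^ 2) *
        ∫⁻ y in scaledSimplex (n + 1) (1 - s), ENNReal.ofReal ((eval (Fin.snoc y s) v) ^ 2) :=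
        lintegral_sq_pderiv_slice_le (i := 0) ht (fun w hw => hinv w hw 0) hv s
    _ ≤ _ := by
      have hd : 1 ≤ (n + 2 : ℝ) * (1 - s) := by
        rwa [div_le_iff₀ (by positivity), mul_comm] at hts
      gcongr
      rw [div_pow, div_le_iff₀ (by positivity)]
      calc C ^ 2 ≤ C ^ 2 * ((n + 2) * (1 - s)) ^ 2 :=
            le_mul_of_one_le_right (sq_nonneg C) (one_le_pow₀ hd)
        _ = _ := by ring

/-- Slicing bound on `K_* = {x ∈ K^d : x_d < 1 - 1/d}` (here `d = n + 2 ≥ 2`): if the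
inverse inequality with constant `C` holds on the `(d-1)`-dimensional unit simplex for
polynomials of total degree `≤ p`, then every polynomial `v` of total degree `≤ p` on `K^d`
satisfies `‖∂v/∂x_1‖²_{L²(K_*)} ≤ d² C² ‖v‖²_{L²(K_*)}`. -/
theorem slicing_inverse_inequality (n p : ℕ) (C : ℝ) (hC : 0 ≤ C)
    (hinv : ∀ w : MvPolynomial (Fin (n + 1)) ℝ, w.totalDegree ≤ p → ∀ i : Fin (n + 1),
      ∫ x in unitSimplex (n + 1), (MvPolynomial.eval x (MvPolynomial.pderiv i w)) ^ 2 ≤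
        C ^ 2 * ∫ x in unitSimplex (n + 1), (MvPolynomial.eval x w) ^ 2)
    (v : MvPolynomial (Fin (n + 2)) ℝ) (hv : v.totalDegree ≤ p) :
    ∫ x in {x ∈ unitSimplex (n + 2) | x (Fin.last (n + 1)) < 1 - 1 / (n + 2 : ℝ)},
        (MvPolynomial.eval x (MvPolynomial.pderiv 0 v)) ^ 2 ≤
      ((n + 2 : ℝ)) ^ 2 * C ^ 2 *
        ∫ x in {x ∈ unitSimplex (n + 2) | x (Fin.last (n + 1)) < 1 - 1 / (n + 2 : ℝ)},
          (MvPolynomial.eval x v) ^ 2 :=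
  slicing_inverse_inequality_general n p C hinv v hv
end
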